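/- arXiv:1105.3234 — 4 statements merged into one kernel-verified Lean document; each statement's English description precedes it below -/
import Mathlib

section
/- Let (G,γ) be a Z²-colored graph and suppose that G is a (2,2)-graph. Then (G,γ) is a Ross graph if and only if every subgraph of G that is a Laman circuit has non-trivial Z²-image. -/
/-- A finite directed multigraph: each edge has a tail and a head vertex. -/
structure Multigraph (V : Type) (E : Type) where
  tail : E → V
  head : E → V

namespace Multigraph

variable {V E Γ : Type}

/-- The starting vertex of a step `(e, b)`: the edge `e` traversed forwards if `b = true`,
backwards otherwise. -/
def stepSrc (G : Multigraph V E) (s : E × Bool) : V :=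
  if s.2 then G.tail s.1 else G.head s.1

/-- The ending vertex of a step `(e, b)`. -/
def stepDst (G : Multigraph V E) (s : E × Bool) : V :=
  if s.2 then G.head s.1 else G.tail s.1

/-- `G.WalkFrom u v w`: the list of steps `w` is a walk from `u` to `v`
(edge orientations ignored: each step records an edge and a traversal direction). -/
inductive WalkFrom (G : Multigraph V E) : V → V → List (E × Bool) → Prop
  | nil (v : V) : WalkFrom G v v []
  | cons {v : V} (s : E × Bool) {rest : List (E × Bool)} :
      WalkFrom G (G.stepDst s) v rest → WalkFrom G (G.stepSrc s) v (s :: rest)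

/-- `ρ` of a walk: the sum of the colors of forward-traversed edges minus
the sum of the colors of backward-traversed edges. -/
def rho [AddCommGroup Γ] (γ : E → Γ) (w : List (E × Bool)) : Γ :=
  (w.map fun s => if s.2 then γ s.1 else -γ s.1).sum

/-- A cycle contained in the subgraph with edge set `S`: a nonempty closed walk,
with no repeated edges and no repeated vertices. -/
def IsCycleIn (G : Multigraph V E) (S : Finset E) (w : List (E × Bool)) : Prop :=
  (∃ v, G.WalkFrom v v w) ∧ w ≠ [] ∧ (∀ s ∈ w, s.1 ∈ S) ∧
    (w.map Prod.fst).Nodup ∧ (w.map G.stepSrc).Nodup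

/-- The subgraph with edge set `S` has trivial `Γ`-image: `ρ(C) = 0` for every
cycle `C` contained in it. -/
def TrivialImage [AddCommGroup Γ] (G : Multigraph V E) (γ : E → Γ) (S : Finset E) : Prop :=
  ∀ w, G.IsCycleIn S w → rho γ w = 0

/-- The vertices spanned by an edge set. -/
def verts [DecidableEq V] (G : Multigraph V E) (S : Finset E) : Finset V :=
  S.image G.tail ∪ S.image G.head

/-- The edge set `S` is `(k, ℓ)`-sparse: every nonempty subgraph with `n'` vertices and
`m'` edges satisfies `m' ≤ k n' - ℓ`. -/
def Sparse [DecidableEq V] (G : Multigraph V E) (k ℓ : ℤ) (S : Finset E) : Prop :=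
  ∀ S' ⊆ S, S'.Nonempty → (S'.card : ℤ) ≤ k * ((G.verts S').card : ℤ) - ℓ

/-- The edge set `S` is a `(k, ℓ)`-graph (as a subgraph on its spanned vertices):
it is `(k, ℓ)`-sparse and has exactly `k n - ℓ` edges. -/
def Tight [DecidableEq V] (G : Multigraph V E) (k ℓ : ℤ) (S : Finset E) : Prop :=
  G.Sparse k ℓ S ∧ (S.card : ℤ) = k * ((G.verts S).card : ℤ) - ℓ

/-- The edge set `S` is a `(k, ℓ)`-circuit: edge-minimal not `(k, ℓ)`-sparse. -/
def Circuit [DecidableEq V] [DecidableEq E] (G : Multigraph V E) (k ℓ : ℤ) (S : Finset E) :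
    Prop :=
  ¬ G.Sparse k ℓ S ∧ ∀ e ∈ S, G.Sparse k ℓ (S.erase e)

/-- A `(k, ℓ)`-basis of `G`: a maximal `(k, ℓ)`-sparse edge set. -/
def Basis [DecidableEq V] (G : Multigraph V E) (k ℓ : ℤ) (L : Finset E) : Prop :=
  G.Sparse k ℓ L ∧ ∀ L', L ⊆ L' → G.Sparse k ℓ L' → L' = L

/-- `C` is the fundamental `(k, ℓ)`-circuit of some edge `e ∉ L` with respect to the
`(k, ℓ)`-basis `L`: a `(k, ℓ)`-circuit contained in `L + e`. -/
def FundCircuit [DecidableEq V] [DecidableEq E] (G : Multigraph V E) (k ℓ : ℤ)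
    (L C : Finset E) : Prop :=
  G.Circuit k ℓ C ∧ ∃ e, e ∉ L ∧ C ⊆ insert e L

/-- The whole graph `G` is a `(k, ℓ)`-graph: `(k, ℓ)`-sparse, with exactly
`k n - ℓ` edges where `n` is the number of vertices of `G`. -/
def IsKLGraph [DecidableEq V] [Fintype V] [Fintype E] (G : Multigraph V E) (k ℓ : ℤ) : Prop :=
  G.Sparse k ℓ Finset.univ ∧ (Fintype.card E : ℤ) = k * (Fintype.card V : ℤ) - ℓ

/-- The colored subgraph with edge set `S` is Ross-sparse: nonempty subgraphs with trivial
`Γ`-image satisfy `m' ≤ 2n' - 3`, and those with non-trivial image satisfy `m' ≤ 2n' - 2`. -/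
def RossSparseOn [DecidableEq V] [AddCommGroup Γ] (G : Multigraph V E) (γ : E → Γ)
    (S : Finset E) : Prop :=
  ∀ S' ⊆ S, S'.Nonempty →
    (G.TrivialImage γ S' → (S'.card : ℤ) ≤ 2 * ((G.verts S').card : ℤ) - 3) ∧
    (¬ G.TrivialImage γ S' → (S'.card : ℤ) ≤ 2 * ((G.verts S').card : ℤ) - 2)

/-- The colored subgraph with edge set `S` is a Ross graph (on its spanned vertices):
Ross-sparse with exactly `2n - 2` edges. -/
def RossGraphOn [DecidableEq V] [AddCommGroup Γ] (G : Multigraph V E) (γ : E → Γ)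
    (S : Finset E) : Prop :=
  G.RossSparseOn γ S ∧ (S.card : ℤ) = 2 * ((G.verts S).card : ℤ) - 2

/-- The whole colored graph `(G, γ)` is a Ross graph: Ross-sparse with exactly `2n - 2`
edges, `n` being the number of vertices of `G`. -/
def RossGraph [DecidableEq V] [Fintype V] [Fintype E] [AddCommGroup Γ] (G : Multigraph V E)
    (γ : E → Γ) : Prop :=
  G.RossSparseOn γ Finset.univ ∧ (Fintype.card E : ℤ) = 2 * (Fintype.card V : ℤ) - 2

/-- The colored graph `(G, γ)` is cone-Laman-sparse: nonempty subgraphs with trivial image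
satisfy `m' ≤ 2n' - 3`, those with non-trivial image satisfy `m' ≤ 2n' - 1`. -/
def ConeLamanSparse [DecidableEq V] [AddCommGroup Γ] (G : Multigraph V E) (γ : E → Γ) : Prop :=
  ∀ S' : Finset E, S'.Nonempty →
    (G.TrivialImage γ S' → (S'.card : ℤ) ≤ 2 * ((G.verts S').card : ℤ) - 3) ∧
    (¬ G.TrivialImage γ S' → (S'.card : ℤ) ≤ 2 * ((G.verts S').card : ℤ) - 1)

/-- The whole colored graph `(G, γ)` is a cone-Laman graph: cone-Laman-sparse with exactly
`2n - 1` edges, `n` being the number of vertices of `G`. -/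
def ConeLamanGraph [DecidableEq V] [Fintype V] [Fintype E] [AddCommGroup Γ]
    (G : Multigraph V E) (γ : E → Γ) : Prop :=
  G.ConeLamanSparse γ ∧ (Fintype.card E : ℤ) = 2 * (Fintype.card V : ℤ) - 1

/-- A (simple) path from `u` to `v` using only edges in `S`: a walk visiting no vertex
twice. -/
def IsPathIn (G : Multigraph V E) (S : Finset E) (u v : V) (w : List (E × Bool)) : Prop :=
  G.WalkFrom u v w ∧ (∀ s ∈ w, s.1 ∈ S) ∧ (u :: w.map G.stepDst).Nodup

/-- `G` is connected. -/
def Connected (G : Multigraph V E) : Prop :=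
  ∀ u v : V, ∃ w : List (E × Bool), G.WalkFrom u v w

/-- `T` is a spanning tree of `G`: every pair of vertices is joined by a path in `T`,
and `T` contains no cycle. -/
def IsSpanningTree (G : Multigraph V E) (T : Finset E) : Prop :=
  (∀ u v : V, ∃ w, G.IsPathIn T u v w) ∧ ∀ w, ¬ G.IsCycleIn T w

/-- `T` is a spanning forest of `G`: a maximal acyclic edge set. -/
def IsSpanningForest (G : Multigraph V E) (T : Finset E) : Prop :=
  (∀ w, ¬ G.IsCycleIn T w) ∧
    ∀ T', T ⊆ T' → (∀ w, ¬ G.IsCycleIn T' w) → T' = T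

/-- In the tree `T` rooted at `r`, vertex `x` lies on the (unique) path from the root `r`
to `y`; i.e. `x` is an ancestor of `y`. -/
def Anc (G : Multigraph V E) (T : Finset E) (r x y : V) : Prop :=
  ∀ w, G.IsPathIn T r y w → x ∈ (r :: w.map G.stepDst)

/-- `a` is the least common ancestor of `i` and `j` in the tree `T` rooted at `r`:
the vertex where the paths from `i` to `r` and from `j` to `r` first converge. -/
def IsLCA (G : Multigraph V E) (T : Finset E) (r a i j : V) : Prop :=
  G.Anc T r a i ∧ G.Anc T r a j ∧ ∀ x, G.Anc T r x i → G.Anc T r x j → G.Anc T r x a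

/-- The development of a `ℤ/3ℤ`-colored graph: vertices `i_z`, and for each edge `ij`
with color `γ_ij` the three edges `i_z j_{z + γ_ij}`. -/
def Development (G : Multigraph V E) (γ : E → ZMod 3) :
    Multigraph (V × ZMod 3) (E × ZMod 3) where
  tail s := (G.tail s.1, s.2)
  head s := (G.head s.1, s.2 + γ s.1)

/-- The lift `π⁻¹(S)` in the development of the subgraph with edge set `S`. -/
def lift [DecidableEq E] (S : Finset E) : Finset (E × ZMod 3) :=
  S ×ˢ (Finset.univ : Finset (ZMod 3))

/-- The map `α_z : i_w ↦ i_{w+z}` on the vertices of the development. -/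
def devShift (z : ZMod 3) : V × ZMod 3 → V × ZMod 3 :=
  fun p => (p.1, p.2 + z)

/-- The map `α_z` on the edges of the development. -/
def devShiftE (z : ZMod 3) : E × ZMod 3 → E × ZMod 3 :=
  fun s => (s.1, s.2 + z)

/-- Two vertices of a multigraph are adjacent if some edge joins them (in either
direction). -/
def Adj (G : Multigraph V E) (u v : V) : Prop :=
  ∃ e, (G.tail e = u ∧ G.head e = v) ∨ (G.tail e = v ∧ G.head e = u)

end Multigraph

lemma trivialImage_mono {V E Γ : Type} [AddCommGroup Γ] (G : Multigraph V E) (γ : E → Γ)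
    {S T : Finset E} (h : S ⊆ T) (hT : G.TrivialImage γ T) : G.TrivialImage γ S := by
  intro w hw
  exact hT w ⟨hw.1, hw.2.1, fun s hs => h (hw.2.2.1 s hs), hw.2.2.2.1, hw.2.2.2.2⟩

lemma exists_circuit_subset {V E : Type} [DecidableEq V] [DecidableEq E]
    (G : Multigraph V E) (k ℓ : ℤ) (S : Finset E) (h : ¬ G.Sparse k ℓ S) :
    ∃ C ⊆ S, G.Circuit k ℓ C := by
  induction S using Finset.strongInduction with
  | _ S ih =>
    by_cases hall : ∀ e ∈ S, G.Sparse k ℓ (S.erase e)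
    · exact ⟨S, subset_rfl, h, hall⟩
    · push_neg at hall
      obtain ⟨e, he, hns⟩ := hall
      obtain ⟨C, hCs, hC⟩ := ih (S.erase e) (Finset.erase_ssubset he) hns
      exact ⟨C, hCs.trans (Finset.erase_subset _ _), hC⟩

/-- a `ℤ²`-colored `(2,2)`-graph is Ross iff every Laman circuit subgraph has
non-trivial `ℤ²`-image. -/
theorem ross_iff_laman_circuits_nontrivial
    {V E : Type} [Fintype V] [Fintype E] [DecidableEq V] [DecidableEq E]
    (G : Multigraph V E) (γ : E → ℤ × ℤ) (h22 : G.IsKLGraph 2 2) :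
    G.RossGraph γ ↔ ∀ C : Finset E, G.Circuit 2 3 C → ¬ G.TrivialImage γ C := by
  constructor
  · intro hR C hC ht
    have hns : ¬ G.Sparse 2 3 C := hC.1
    rw [Multigraph.Sparse] at hns
    push_neg at hns
    obtain ⟨S', hS'C, hne, hgt⟩ := hns
    have := (hR.1 S' (Finset.subset_univ S') hne).1 (trivialImage_mono G γ hS'C ht)
    linarith
  · intro hcirc
    refine ⟨fun S' _ hne => ⟨?_, fun _ => ?_⟩, h22.2⟩
    · intro htriv
      by_contra hlt
      push_neg at hlt
      have hns : ¬ G.Sparse 2 3 S' := by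
        intro hs
        have := hs S' subset_rfl hne
        linarith
      obtain ⟨C, hCS, hC⟩ := exists_circuit_subset G 2 3 S' hns
      exact hcirc C hC (trivialImage_mono G γ hCS htriv)
    · exact h22.1 S' (Finset.subset_univ S') hne
end

section
/- Let G be a (2,1)-graph, and let G' be a subgraph of G that is a Laman circuit. Then either G' is contained in a (2,2)-circuit of G, or G' is a fundamental Laman circuit with respect to any Laman basis of G. -/
namespace Multigraph

variable {V E Γ : Type}

set_option linter.unusedSectionVars false

variable {V E : Type} [Fintype V] [Fintype E] [DecidableEq V] [DecidableEq E]

private lemma verts_mono (G : Multigraph V E) {S T : Finset E} (h : S ⊆ T) :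
    G.verts S ⊆ G.verts T :=
  Finset.union_subset_union (Finset.image_subset_image h) (Finset.image_subset_image h)

private lemma verts_union_eq (G : Multigraph V E) (S T : Finset E) :
    G.verts (S ∪ T) = G.verts S ∪ G.verts T := by
  simp only [Multigraph.verts, Finset.image_union]
  ac_rfl

private lemma key_count (G : Multigraph V E) (S T : Finset E) :
    ((G.verts (S ∪ T)).card : ℤ) + ((G.verts (S ∩ T)).card : ℤ)
      ≤ ((G.verts S).card : ℤ) + ((G.verts T).card : ℤ) := by
  have h2 : (G.verts (S ∩ T)).card ≤ ((G.verts S) ∩ (G.verts T)).card :=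
    Finset.card_le_card (Finset.subset_inter
      (G.verts_mono Finset.inter_subset_left) (G.verts_mono Finset.inter_subset_right))
  have h3 := Finset.card_union_add_card_inter (G.verts S) (G.verts T)
  have h1 : (G.verts (S ∪ T)).card = ((G.verts S) ∪ (G.verts T)).card := by
    rw [verts_union_eq]
  omega

private lemma circuit_lb {G : Multigraph V E} {C : Finset E} (hC : G.Circuit 2 3 C) :
    C.Nonempty ∧ 2 * ((G.verts C).card : ℤ) - 2 ≤ (C.card : ℤ) := by
  obtain ⟨hns, hmin⟩ := hC
  simp only [Multigraph.Sparse] at hns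
  push_neg at hns
  obtain ⟨S, hsub, hne, hgt⟩ := hns
  have hSC : S = C := by
    by_contra h
    obtain ⟨f, hfC, hfS⟩ := Finset.exists_of_ssubset (hsub.ssubset_of_ne h)
    have hsp := hmin f hfC S (fun x hx => Finset.mem_erase.2 ⟨fun e => hfS (e ▸ hx), hsub hx⟩) hne
    linarith
  subst hSC
  exact ⟨hne, by linarith⟩

private lemma lemmaA {G : Multigraph V E} (h21 : G.Sparse 2 1 Finset.univ)
    {C : Finset E} (hC : G.Circuit 2 3 C) {X : Finset E} (hCX : C ⊆ X)
    (hX : ¬ G.Sparse 2 2 X) (hXC : G.Sparse 2 2 (X \ C)) :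
    ∃ D, G.Circuit 2 2 D ∧ C ⊆ D := by
  classical
  obtain ⟨hCne, hClb⟩ := circuit_lb hC
  obtain ⟨D, hDmem, hDmin⟩ := Finset.exists_min_image
    ((X.powerset).filter fun Y => C ⊆ Y ∧ ¬ G.Sparse 2 2 Y) Finset.card
    ⟨X, by simp [hCX, hX]⟩
  simp only [Finset.mem_filter, Finset.mem_powerset] at hDmem
  obtain ⟨hDX, hCD, hDns⟩ := hDmem
  refine ⟨D, ⟨hDns, fun e heD => ?_⟩, hCD⟩
  by_cases heC : e ∈ C
  · -- e ∈ C : counting argument shows D.erase e is (2,2)-sparse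
    intro S hSsub hSne
    by_contra hgt
    push_neg at hgt
    have heS : e ∉ S := fun h => (Finset.mem_erase.1 (hSsub h)).1 rfl
    have hSD : S ⊆ D := hSsub.trans (Finset.erase_subset _ _)
    rcases (S ∩ C).eq_empty_or_nonempty with hI | hI
    · have hsub' : S ⊆ X \ C := fun x hx => Finset.mem_sdiff.2 ⟨hDX (hSD hx),
        fun hxC => (Finset.eq_empty_iff_forall_notMem.1 hI x) (Finset.mem_inter.2 ⟨hx, hxC⟩)⟩
      have := hXC S hsub' hSne
      linarith
    · have hIsub : S ∩ C ⊆ C.erase e := fun x hx => Finset.mem_erase.2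
        ⟨fun h => heS (h ▸ (Finset.mem_inter.1 hx).1), (Finset.mem_inter.1 hx).2⟩
      have hIb := hC.2 e heC (S ∩ C) hIsub hI
      have hcu : ((S ∪ C).card : ℤ) + ((S ∩ C).card : ℤ) = (S.card : ℤ) + (C.card : ℤ) := by
        exact_mod_cast congrArg (Nat.cast (R := ℤ)) (Finset.card_union_add_card_inter S C)
      have hvc := key_count G S C
      have hamb := h21 (S ∪ C) (Finset.subset_univ _) (hSne.mono Finset.subset_union_left)
      linarith
  · -- e ∉ C : minimality of D
    by_contra hns
    have hDe : C ⊆ D.erase e := fun x hx => Finset.mem_erase.2 ⟨fun h => heC (h ▸ hx), hCD hx⟩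
    have hmem : D.erase e ∈ (X.powerset).filter fun Y => C ⊆ Y ∧ ¬ G.Sparse 2 2 Y := by
      simp only [Finset.mem_filter, Finset.mem_powerset]
      exact ⟨(Finset.erase_subset _ _).trans hDX, hDe, hns⟩
    have h1 := hDmin _ hmem
    have h2 := Finset.card_erase_lt_of_mem heD
    omega


end Multigraph

/-- in a `(2,1)`-graph, a Laman circuit is either contained in a
`(2,2)`-circuit or is a fundamental Laman circuit w.r.t. any Laman basis. -/
theorem laman_circuit_in_21_graph_dichotomy
    {V E : Type} [Fintype V] [Fintype E] [DecidableEq V] [DecidableEq E]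
    (G : Multigraph V E) (h21 : G.IsKLGraph 2 1)
    (C : Finset E) (hC : G.Circuit 2 3 C) :
    (∃ D : Finset E, G.Circuit 2 2 D ∧ C ⊆ D) ∨
      (∀ L : Finset E, G.Basis 2 3 L → G.FundCircuit 2 3 L C) := by
  classical
  by_cases hleft : ∃ D : Finset E, G.Circuit 2 2 D ∧ C ⊆ D
  · exact Or.inl hleft
  · refine Or.inr fun L hL => ⟨hC, ?_⟩
    obtain ⟨hCne, hClb⟩ := Multigraph.circuit_lb hC
    have hCL : ¬ C ⊆ L := fun h => hC.1 fun S hS hne => hL.1 S (hS.trans h) hne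
    obtain ⟨e1, he1C, he1L⟩ := Finset.not_subset.1 hCL
    refine ⟨e1, he1L, fun x hx => ?_⟩
    by_cases hxL : x ∈ L
    · exact Finset.mem_insert_of_mem hxL
    · suffices hxe : x = e1 by simp [hxe]
      by_contra hne
      set Y := C ∪ L with hYdef
      by_cases hY : G.Sparse 2 2 Y
      · -- case (ii): Y is (2,2)-sparse; contradict maximality of L
        have hLsub : L ⊆ Y.erase e1 := fun a ha => Finset.mem_erase.2
          ⟨fun h => he1L (h ▸ ha), Finset.mem_union_right _ ha⟩
        have hYe : ¬ G.Sparse 2 3 (Y.erase e1) := by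
          intro hs
          have heq := hL.2 _ hLsub hs
          have hxY : x ∈ Y.erase e1 := Finset.mem_erase.2 ⟨hne, Finset.mem_union_left _ hx⟩
          rw [heq] at hxY
          exact hxL hxY
        simp only [Multigraph.Sparse] at hYe
        push_neg at hYe
        obtain ⟨S, hSsub, hSne, hSv⟩ := hYe
        have he1S : e1 ∉ S := fun h => (Finset.mem_erase.1 (hSsub h)).1 rfl
        rcases (S ∩ C).eq_empty_or_nonempty with hI | hI
        · have hsub' : S ⊆ L := by
            intro a ha
            have haY : a ∈ Y := Finset.mem_of_mem_erase (hSsub ha)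
            rcases Finset.mem_union.1 haY with h | h
            · exact absurd (Finset.mem_inter.2 ⟨ha, h⟩)
                (Finset.eq_empty_iff_forall_notMem.1 hI a)
            · exact h
          have := hL.1 S hsub' hSne
          linarith
        · have hIsub : S ∩ C ⊆ C.erase e1 := fun a ha => Finset.mem_erase.2
            ⟨fun h => he1S (h ▸ (Finset.mem_inter.1 ha).1), (Finset.mem_inter.1 ha).2⟩
          have hIb := hC.2 e1 he1C (S ∩ C) hIsub hI
          have hcu : ((S ∪ C).card : ℤ) + ((S ∩ C).card : ℤ)
              = (S.card : ℤ) + (C.card : ℤ) := by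
            exact_mod_cast congrArg (Nat.cast (R := ℤ)) (Finset.card_union_add_card_inter S C)
          have hvc := Multigraph.key_count G S C
          have hSY : S ∪ C ⊆ Y := Finset.union_subset
            (hSsub.trans (Finset.erase_subset _ _)) Finset.subset_union_left
          have hamb := hY (S ∪ C) hSY (hSne.mono Finset.subset_union_left)
          linarith
      · -- case (i): Y is not (2,2)-sparse; build a (2,2)-circuit containing C
        have hXC : G.Sparse 2 2 (Y \ C) := by
          intro S hs hne
          have hsubL : S ⊆ L := by
            intro a ha
            obtain ⟨haY, haC⟩ := Finset.mem_sdiff.1 (hs ha)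
            rcases Finset.mem_union.1 haY with h | h
            · exact absurd h haC
            · exact h
          have := hL.1 S hsubL hne
          linarith
        exact absurd (Multigraph.lemmaA h21.1 hC Finset.subset_union_left hY hXC) hleft
end

section
/- Let G be a (2,1)-graph and let G' be a subgraph of G that is a Laman circuit. If G' intersects some (2,2)-circuit G'' of G in at least one edge, then G' is contained in G''. -/
lemma my_verts_union {V E : Type} [DecidableEq V] [DecidableEq E] (G : Multigraph V E) (S T : Finset E) :
    G.verts (S ∪ T) = G.verts S ∪ G.verts T := by
  unfold Multigraph.verts
  rw [Finset.image_union, Finset.image_union, Finset.union_union_union_comm]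

lemma my_verts_mono {V E : Type} [DecidableEq V] (G : Multigraph V E) {S T : Finset E}
    (h : S ⊆ T) : G.verts S ⊆ G.verts T :=
  Finset.union_subset_union (Finset.image_subset_image h) (Finset.image_subset_image h)

lemma my_circuit_lb {V E : Type} [DecidableEq V] [DecidableEq E] (G : Multigraph V E)
    {k ℓ : ℤ} {C : Finset E} (h : G.Circuit k ℓ C) :
    k * ((G.verts C).card : ℤ) - ℓ < (C.card : ℤ) := by
  obtain ⟨hns, hmin⟩ := h
  unfold Multigraph.Sparse at hns
  push_neg at hns
  obtain ⟨S, hSC, hSne, hgt⟩ := hns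
  have hSeq : S = C := by
    by_contra hne
    obtain ⟨f, hfC, hfS⟩ := Finset.exists_of_ssubset (hSC.ssubset_of_ne hne)
    have hsub : S ⊆ C.erase f := fun x hx =>
      Finset.mem_erase.mpr ⟨fun hxf => hfS (hxf ▸ hx), hSC hx⟩
    exact absurd (hmin f hfC S hsub hSne) (not_le.mpr hgt)
  subst hSeq
  exact hgt

/-- in a `(2,1)`-graph, a Laman circuit that shares an edge with a
`(2,2)`-circuit is contained in it. -/
theorem laman_circuit_subset_22_circuit
    {V E : Type} [Fintype V] [Fintype E] [DecidableEq V] [DecidableEq E]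
    (G : Multigraph V E) (h21 : G.IsKLGraph 2 1)
    (C D : Finset E) (hC : G.Circuit 2 3 C) (hD : G.Circuit 2 2 D)
    (hmeet : (C ∩ D).Nonempty) :
    C ⊆ D := by
  by_contra hsub
  obtain ⟨e, heC, heD⟩ : ∃ e ∈ C, e ∉ D := by
    by_contra h
    push_neg at h
    exact hsub h
  -- C ∩ D is a proper subset of C, hence (2,3)-sparse
  have hID : C ∩ D ⊆ C.erase e := by
    intro x hx
    rw [Finset.mem_inter] at hx
    exact Finset.mem_erase.mpr ⟨fun hxe => heD (hxe ▸ hx.2), hx.1⟩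
  have hIsparse : ((C ∩ D).card : ℤ) ≤ 2 * ((G.verts (C ∩ D)).card : ℤ) - 3 :=
    hC.2 e heC (C ∩ D) hID hmeet
  have hCcard : 2 * ((G.verts C).card : ℤ) - 3 < (C.card : ℤ) := my_circuit_lb G hC
  have hDcard : 2 * ((G.verts D).card : ℤ) - 2 < (D.card : ℤ) := my_circuit_lb G hD
  have hUne : (C ∪ D).Nonempty := hmeet.mono (Finset.inter_subset_left.trans
    Finset.subset_union_left)
  have hUnion : ((C ∪ D).card : ℤ) ≤ 2 * ((G.verts (C ∪ D)).card : ℤ) - 1 :=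
    h21.1 (C ∪ D) (Finset.subset_univ _) hUne
  have hcards : ((C ∪ D).card : ℤ) + ((C ∩ D).card : ℤ) = (C.card : ℤ) + (D.card : ℤ) := by
    exact_mod_cast congrArg (Nat.cast (R := ℤ)) (Finset.card_union_add_card_inter C D)
  have hvU : G.verts (C ∪ D) = G.verts C ∪ G.verts D := my_verts_union G C D
  have hvI : G.verts (C ∩ D) ⊆ G.verts C ∩ G.verts D :=
    Finset.subset_inter (my_verts_mono G Finset.inter_subset_left)
      (my_verts_mono G Finset.inter_subset_right)
  have h1 : ((G.verts C ∪ G.verts D).card : ℤ) + ((G.verts C ∩ G.verts D).card : ℤ)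
      = ((G.verts C).card : ℤ) + ((G.verts D).card : ℤ) := by
    exact_mod_cast congrArg (Nat.cast (R := ℤ))
      (Finset.card_union_add_card_inter (G.verts C) (G.verts D))
  have h2 : ((G.verts (C ∩ D)).card : ℤ) ≤ ((G.verts C ∩ G.verts D).card : ℤ) := by
    exact_mod_cast Finset.card_le_card hvI
  rw [hvU] at hUnion
  linarith
end

section
/- Let (G,γ) be a Z/3Z-colored graph, let G̃ be its development, and let G̃' be a subgraph of G̃ that is a Laman circuit whose orbit O = G̃' ∪ α₁(G̃') ∪ α₂(G̃') under the Z/3Z-action is connected. Then O has at least 2·|V(O)| edges, where |V(O)| is the number of vertices of O; consequently π(O) has non-trivial Z/3Z-image and violates the count m' ≤ 2n'−1. -/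
theorem List.exists_eq_append_cons_append_cons_of_not_nodup_map {α β : Type*} {f : α → β} :
    ∀ {l : List α}, ¬ (l.map f).Nodup →
      ∃ l₁ a l₂ b l₃, l = l₁ ++ a :: (l₂ ++ b :: l₃) ∧ f a = f b
  | [], h => absurd List.nodup_nil h
  | x :: l, h => by
    rw [List.map_cons, List.nodup_cons, not_and_or, not_not] at h
    rcases h with hx | hl
    · obtain ⟨y, hy, hxy⟩ := List.mem_map.mp hx
      obtain ⟨l₂, l₃, rfl⟩ := List.append_of_mem hy
      exact ⟨[], x, l₂, y, l₃, rfl, hxy.symm⟩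
    · obtain ⟨l₁, a, l₂, b, l₃, rfl, hab⟩ :=
        exists_eq_append_cons_append_cons_of_not_nodup_map hl
      exact ⟨x :: l₁, a, l₂, b, l₃, rfl, hab⟩

namespace Multigraph

variable {V E Γ : Type}

section Walks

variable {G : Multigraph V E}

theorem WalkFrom.append {u v x : V} {w₁ w₂ : List (E × Bool)}
    (h₁ : G.WalkFrom u v w₁) (h₂ : G.WalkFrom v x w₂) : G.WalkFrom u x (w₁ ++ w₂) := by
  induction h₁ with
  | nil => exact h₂
  | cons s _ ih => exact .cons s (ih h₂)

theorem walkFrom_cons_iff {u x : V} {s : E × Bool} {w : List (E × Bool)} :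
    G.WalkFrom u x (s :: w) ↔ u = G.stepSrc s ∧ G.WalkFrom (G.stepDst s) x w := by
  constructor
  · rintro ⟨⟩
    exact ⟨rfl, ‹_›⟩
  · rintro ⟨rfl, h⟩
    exact .cons s h

theorem WalkFrom.exists_of_append {u x : V} {w₁ w₂ : List (E × Bool)}
    (h : G.WalkFrom u x (w₁ ++ w₂)) : ∃ v, G.WalkFrom u v w₁ ∧ G.WalkFrom v x w₂ := by
  induction w₁ generalizing u with
  | nil => exact ⟨u, .nil u, h⟩
  | cons s w₁ ih =>
    obtain ⟨rfl, hrest⟩ := walkFrom_cons_iff.mp h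
    obtain ⟨v, h₁, h₂⟩ := ih hrest
    exact ⟨v, .cons s h₁, h₂⟩

theorem WalkFrom.of_append_cons_append_cons {u x : V} {w₁ w₂ w₃ : List (E × Bool)}
    {s t : E × Bool} (h : G.WalkFrom u x (w₁ ++ s :: (w₂ ++ t :: w₃))) :
    G.WalkFrom u (G.stepSrc s) w₁ ∧ G.WalkFrom (G.stepDst s) (G.stepSrc t) w₂ ∧
      G.WalkFrom (G.stepDst t) x w₃ := by
  obtain ⟨_, h₁, hs⟩ := h.exists_of_append
  obtain ⟨rfl, hs'⟩ := walkFrom_cons_iff.mp hs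
  obtain ⟨_, h₂, ht⟩ := hs'.exists_of_append
  obtain ⟨rfl, h₃⟩ := walkFrom_cons_iff.mp ht
  exact ⟨h₁, h₂, h₃⟩

theorem WalkFrom.mem_of_step_closed {S : Finset E} {W : Set V}
    (hW : ∀ s : E × Bool, s.1 ∈ S → G.stepSrc s ∈ W → G.stepDst s ∈ W)
    {u x : V} {w : List (E × Bool)} (h : G.WalkFrom u x w) (hS : ∀ s ∈ w, s.1 ∈ S)
    (hu : u ∈ W) : x ∈ W := by
  induction h with
  | nil => exact hu
  | cons s _ ih =>
    exact ih (fun s' hs' => hS s' (List.mem_cons_of_mem _ hs'))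
      (hW s (hS s List.mem_cons_self) hu)

@[simp]
theorem stepSrc_reverse (s : E × Bool) : G.stepSrc (s.1, !s.2) = G.stepDst s := by
  obtain ⟨e, b⟩ := s
  cases b <;> rfl

@[simp]
theorem stepDst_reverse (s : E × Bool) : G.stepDst (s.1, !s.2) = G.stepSrc s := by
  obtain ⟨e, b⟩ := s
  cases b <;> rfl

theorem eq_reverse_of_fst_eq {s t : E × Bool} (he : s.1 = t.1)
    (hne : G.stepSrc s ≠ G.stepSrc t) : t = (s.1, !s.2) := by
  obtain ⟨e, b⟩ := s
  obtain ⟨e', b'⟩ := t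
  obtain rfl : e = e' := he
  cases b <;> cases b' <;> simp_all

theorem rho_append [AddCommGroup Γ] (γ : E → Γ) (w₁ w₂ : List (E × Bool)) :
    rho γ (w₁ ++ w₂) = rho γ w₁ + rho γ w₂ := by
  simp [rho]

theorem rho_cons [AddCommGroup Γ] (γ : E → Γ) (s : E × Bool) (w : List (E × Bool)) :
    rho γ (s :: w) = rho γ [s] + rho γ w :=
  rho_append γ [s] w

@[simp]
theorem rho_reverse [AddCommGroup Γ] (γ : E → Γ) (s : E × Bool) :
    rho γ [(s.1, !s.2)] = -rho γ [s] := by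
  obtain ⟨e, b⟩ := s
  cases b <;> simp [rho]

theorem rho_append_cons_append_cons [AddCommGroup Γ] (γ : E → Γ)
    (w₁ w₂ w₃ : List (E × Bool)) (s t : E × Bool) :
    rho γ (w₁ ++ s :: (w₂ ++ t :: w₃)) =
      rho γ w₁ + rho γ [s] + rho γ w₂ + rho γ [t] + rho γ w₃ := by
  simp only [rho, List.map_append, List.map_cons, List.map_nil, List.sum_append,
    List.sum_cons, List.sum_nil]
  abel

/-- A closed walk with a repeated vertex splits into two shorter closed walks, and one that
traverses some edge twice without repeating a vertex goes back and forth along it. -/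
theorem TrivialImage.rho_eq_zero [AddCommGroup Γ] {γ : E → Γ} {S : Finset E}
    (hT : G.TrivialImage γ S) {v : V} {w : List (E × Bool)} (hw : G.WalkFrom v v w)
    (hS : ∀ s ∈ w, s.1 ∈ S) : rho γ w = 0 := by
  induction hn : w.length using Nat.strong_induction_on generalizing v w with
  | _ n ih =>
  subst hn
  have ih' : ∀ {u w'}, w'.length < w.length → w' ⊆ w → G.WalkFrom u u w' →
      rho γ w' = 0 :=
    fun hlen hsub hw' => ih _ hlen hw' (fun s hs => hS s (hsub hs)) rfl
  by_cases hsrc : (w.map G.stepSrc).Nodup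
  · by_cases hedge : (w.map Prod.fst).Nodup
    · rcases eq_or_ne w [] with rfl | hne
      · rfl
      · exact hT w ⟨⟨v, hw⟩, hne, hS, hedge, hsrc⟩
    obtain ⟨w₁, s, w₂, t, w₃, rfl, hst⟩ :=
      List.exists_eq_append_cons_append_cons_of_not_nodup_map hedge
    have hne : G.stepSrc s ≠ G.stepSrc t := by
      simp only [List.map_append, List.map_cons, List.nodup_append, List.nodup_cons,
        List.mem_append, List.mem_cons, List.mem_map] at hsrc
      exact fun h => hsrc.2.1.1 (Or.inr (Or.inl h))
    obtain rfl := eq_reverse_of_fst_eq hst hne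
    obtain ⟨h₁, h₂, h₃⟩ := hw.of_append_cons_append_cons
    simp only [stepSrc_reverse, stepDst_reverse] at h₂ h₃
    have hρ₂ : rho γ w₂ = 0 := ih' (by grind) (by intro; simp; tauto) h₂
    have hρ₁₃ : rho γ (w₁ ++ w₃) = 0 :=
      ih' (by grind) (by intro; simp; tauto) (h₁.append h₃)
    calc rho γ (w₁ ++ s :: (w₂ ++ (s.1, !s.2) :: w₃))
        _ = rho γ (w₁ ++ w₃) + rho γ w₂ := by
          rw [rho_append_cons_append_cons, rho_reverse, rho_append]; abel
        _ = 0 := by rw [hρ₁₃, hρ₂, add_zero]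
  · obtain ⟨w₁, s, w₂, t, w₃, rfl, hst⟩ :=
      List.exists_eq_append_cons_append_cons_of_not_nodup_map hsrc
    obtain ⟨h₁, h₂, h₃⟩ := hw.of_append_cons_append_cons
    have hρ₂ : rho γ (s :: w₂) = 0 :=
      ih' (by grind) (by intro; simp; tauto) (.cons s (hst ▸ h₂))
    have hρ₁₃ : rho γ (w₁ ++ t :: w₃) = 0 :=
      ih' (by grind) (by intro; simp; tauto) (h₁.append (hst ▸ .cons t h₃))
    calc rho γ (w₁ ++ s :: (w₂ ++ t :: w₃))
        _ = rho γ (s :: w₂) + rho γ (w₁ ++ t :: w₃) := by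
          rw [rho_append_cons_append_cons, rho_cons γ s w₂, rho_append, rho_cons γ t w₃]; abel
        _ = 0 := by rw [hρ₁₃, hρ₂, add_zero]

end Walks

section Counting

variable [DecidableEq V] {G : Multigraph V E}

theorem tail_mem_verts {S : Finset E} {e : E} (h : e ∈ S) : G.tail e ∈ G.verts S :=
  Finset.mem_union_left _ (Finset.mem_image_of_mem _ h)

theorem head_mem_verts {S : Finset E} {e : E} (h : e ∈ S) : G.head e ∈ G.verts S :=
  Finset.mem_union_right _ (Finset.mem_image_of_mem _ h)

theorem stepSrc_mem_verts {S : Finset E} {s : E × Bool} (h : s.1 ∈ S) :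
    G.stepSrc s ∈ G.verts S := by
  obtain ⟨e, b⟩ := s
  cases b
  exacts [head_mem_verts h, tail_mem_verts h]

theorem stepDst_mem_verts {S : Finset E} {s : E × Bool} (h : s.1 ∈ S) :
    G.stepDst s ∈ G.verts S := by
  obtain ⟨e, b⟩ := s
  cases b
  exacts [tail_mem_verts h, head_mem_verts h]

theorem verts_mono_s18 {A B : Finset E} (h : A ⊆ B) : G.verts A ⊆ G.verts B :=
  Finset.union_subset_union (Finset.image_subset_image h) (Finset.image_subset_image h)

theorem verts_union [DecidableEq E] (A B : Finset E) :
    G.verts (A ∪ B) = G.verts A ∪ G.verts B := by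
  simp only [verts, Finset.image_union]
  exact Finset.union_union_union_comm _ _ _ _

theorem verts_inter_nonempty_of_connected [DecidableEq E] {A B : Finset E}
    (hconn : ∀ u ∈ G.verts (A ∪ B), ∀ v ∈ G.verts (A ∪ B),
      ∃ w, G.WalkFrom u v w ∧ ∀ s ∈ w, s.1 ∈ A ∪ B)
    (hA : A.Nonempty) (hB : B.Nonempty) : (G.verts A ∩ G.verts B).Nonempty := by
  by_contra hdisj
  obtain ⟨a, ha⟩ := hA
  obtain ⟨b, hb⟩ := hB
  obtain ⟨w, hw, hwS⟩ := hconn _ (verts_mono_s18 Finset.subset_union_left (tail_mem_verts ha))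
    _ (verts_mono_s18 Finset.subset_union_right (tail_mem_verts hb))
  have hclosed : ∀ s : E × Bool, s.1 ∈ A ∪ B → G.stepSrc s ∈ (G.verts A : Set V) →
      G.stepDst s ∈ (G.verts A : Set V) := by
    intro s hs hsrc
    rcases Finset.mem_union.mp hs with hs | hs
    · exact stepDst_mem_verts hs
    · exact absurd ⟨_, Finset.mem_inter.mpr ⟨hsrc, stepSrc_mem_verts hs⟩⟩ hdisj
  exact hdisj ⟨_, Finset.mem_inter.mpr
    ⟨hw.mem_of_step_closed hclosed hwS (tail_mem_verts ha), tail_mem_verts hb⟩⟩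

def freedom (G : Multigraph V E) (k : ℤ) (S : Finset E) : ℤ :=
  k * (G.verts S).card - S.card

variable {k ℓ : ℤ}

theorem sparse_iff_le_freedom {S : Finset E} :
    G.Sparse k ℓ S ↔ ∀ S' ⊆ S, S'.Nonempty → ℓ ≤ G.freedom k S' := by
  simp only [Sparse, freedom]
  refine forall₂_congr fun _ _ => imp_congr_right fun _ => ?_
  constructor <;> intro h <;> linarith

theorem Sparse.mono {S T : Finset E} (hT : G.Sparse k ℓ T) (h : S ⊆ T) : G.Sparse k ℓ S :=
  fun S' hS' => hT S' (hS'.trans h)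

variable [DecidableEq E] {C : Finset E}

theorem Circuit.nonempty (hC : G.Circuit k ℓ C) : C.Nonempty := by
  rw [Finset.nonempty_iff_ne_empty]
  rintro rfl
  exact hC.1 fun S' hS' hne => absurd (Finset.subset_empty.mp hS' ▸ hne) Finset.not_nonempty_empty

theorem Circuit.sparse_of_ssubset (hC : G.Circuit k ℓ C) {S : Finset E} (h : S ⊂ C) :
    G.Sparse k ℓ S := by
  obtain ⟨e, he, heS⟩ := Finset.exists_of_ssubset h
  exact (hC.2 e he).mono (Finset.subset_erase.mpr ⟨h.subset, heS⟩)

theorem Circuit.le_freedom_of_ssubset (hC : G.Circuit k ℓ C) {S : Finset E} (h : S ⊂ C)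
    (hS : S.Nonempty) : ℓ ≤ G.freedom k S :=
  sparse_iff_le_freedom.mp (hC.sparse_of_ssubset h) S subset_rfl hS

theorem Circuit.freedom_lt (hC : G.Circuit k ℓ C) : G.freedom k C < ℓ := by
  by_contra! hle
  refine hC.1 (sparse_iff_le_freedom.mpr fun S hS hne => ?_)
  rcases hS.eq_or_ssubset with rfl | hS
  exacts [hle, hC.le_freedom_of_ssubset hS hne]

/-- Either `U` and `B` share a proper part of `B`, whose count is at least `ℓ`, or they share
only vertices, each of which saves `k ≥ ℓ - 1`. -/
theorem Circuit.freedom_union_le (hk : 0 ≤ k) (hℓ : ℓ ≤ k + 1) {U B : Finset E}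
    (hB : G.Circuit k ℓ B) (hUB : (G.verts U ∩ G.verts B).Nonempty) :
    G.freedom k (U ∪ B) ≤ G.freedom k U := by
  by_cases hsub : B ⊆ U
  · rw [Finset.union_eq_left.mpr hsub]
  have hE : ((U ∪ B).card : ℤ) + (U ∩ B).card = U.card + B.card := by
    exact_mod_cast Finset.card_union_add_card_inter U B
  have hV : ((G.verts (U ∪ B)).card : ℤ) + (G.verts U ∩ G.verts B).card =
      (G.verts U).card + (G.verts B).card := by
    rw [verts_union]
    exact_mod_cast Finset.card_union_add_card_inter _ _
  have hshared : ℓ - 1 ≤ k * (G.verts U ∩ G.verts B).card - (U ∩ B).card := by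
    rcases (U ∩ B).eq_empty_or_nonempty with hI | hI
    · have hpos : (1 : ℤ) ≤ (G.verts U ∩ G.verts B).card := by
        exact_mod_cast Finset.card_pos.mpr hUB
      rw [hI, Finset.card_empty, Nat.cast_zero, sub_zero]
      nlinarith
    · have hproper : U ∩ B ⊂ B :=
        Finset.ssubset_iff_subset_ne.mpr ⟨Finset.inter_subset_right,
          fun h => hsub (h ▸ Finset.inter_subset_left)⟩
      have hIfree := hB.le_freedom_of_ssubset hproper hI
      have hVI : ((G.verts (U ∩ B)).card : ℤ) ≤ (G.verts U ∩ G.verts B).card := by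
        exact_mod_cast Finset.card_le_card (Finset.subset_inter
          (verts_mono_s18 Finset.inter_subset_left) (verts_mono_s18 Finset.inter_subset_right))
      unfold freedom at hIfree
      nlinarith
  have hBfree := hB.freedom_lt
  unfold freedom at hBfree ⊢
  nlinarith

theorem freedom_union_union_lt (hk : 0 ≤ k) (hℓ : ℓ ≤ k + 1) {A B D : Finset E}
    (hA : G.Circuit k ℓ A) (hB : G.Circuit k ℓ B) (hD : G.Circuit k ℓ D)
    (hconn : ∀ u ∈ G.verts (A ∪ B ∪ D), ∀ v ∈ G.verts (A ∪ B ∪ D),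
      ∃ w, G.WalkFrom u v w ∧ ∀ s ∈ w, s.1 ∈ A ∪ B ∪ D) :
    G.freedom k (A ∪ B ∪ D) < ℓ := by
  have glue : ∀ {B D : Finset E}, G.Circuit k ℓ B → G.Circuit k ℓ D →
      (G.verts A ∩ G.verts B).Nonempty →
      (∀ u ∈ G.verts (A ∪ B ∪ D), ∀ v ∈ G.verts (A ∪ B ∪ D),
        ∃ w, G.WalkFrom u v w ∧ ∀ s ∈ w, s.1 ∈ A ∪ B ∪ D) →
      G.freedom k (A ∪ B ∪ D) < ℓ := by
    intro B D hB hD hAB hconn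
    have hABD := verts_inter_nonempty_of_connected hconn
      (hA.nonempty.mono Finset.subset_union_left) hD.nonempty
    calc G.freedom k (A ∪ B ∪ D)
        _ ≤ G.freedom k (A ∪ B) := hD.freedom_union_le hk hℓ hABD
        _ ≤ G.freedom k A := hB.freedom_union_le hk hℓ hAB
        _ < ℓ := hA.freedom_lt
  have hA_BD := verts_inter_nonempty_of_connected (A := A) (B := B ∪ D)
    (by rwa [← Finset.union_assoc]) hA.nonempty (hB.nonempty.mono Finset.subset_union_left)
  rw [verts_union, Finset.inter_union_distrib_left, Finset.union_nonempty] at hA_BD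
  rcases hA_BD with hAB | hAD
  · exact glue hB hD hAB hconn
  · rw [Finset.union_right_comm] at hconn ⊢
    exact glue hD hB hAD hconn

end Counting

section SelfEmbedding

structure IsSelfEmbedding (G : Multigraph V E) (f : V → V) (g : E → E) : Prop where
  injective_vert : Function.Injective f
  injective_edge : Function.Injective g
  tail_map : ∀ e, G.tail (g e) = f (G.tail e)
  head_map : ∀ e, G.head (g e) = f (G.head e)

variable [DecidableEq V] [DecidableEq E]
variable {G : Multigraph V E} {f : V → V} {g : E → E} {k ℓ : ℤ}

theorem IsSelfEmbedding.verts_image (hφ : G.IsSelfEmbedding f g) (S : Finset E) :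
    G.verts (S.image g) = (G.verts S).image f := by
  simp only [verts, Finset.image_union, Finset.image_image]
  congr 1 <;> refine Finset.image_congr fun e _ => ?_
  exacts [hφ.tail_map e, hφ.head_map e]

theorem IsSelfEmbedding.freedom_image (hφ : G.IsSelfEmbedding f g) (S : Finset E) :
    G.freedom k (S.image g) = G.freedom k S := by
  rw [freedom, freedom, hφ.verts_image, Finset.card_image_of_injective _ hφ.injective_vert,
    Finset.card_image_of_injective _ hφ.injective_edge]

theorem IsSelfEmbedding.sparse_image_iff (hφ : G.IsSelfEmbedding f g) {S : Finset E} :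
    G.Sparse k ℓ (S.image g) ↔ G.Sparse k ℓ S := by
  simp only [sparse_iff_le_freedom]
  constructor
  · intro h T hT hne
    simpa only [hφ.freedom_image] using h _ (Finset.image_subset_image hT) (hne.image g)
  · intro h T' hT' hne
    obtain ⟨T, hT, rfl⟩ := Finset.subset_image_iff.mp hT'
    rw [hφ.freedom_image]
    exact h T hT (Finset.image_nonempty.mp hne)

theorem IsSelfEmbedding.circuit_image (hφ : G.IsSelfEmbedding f g) {C : Finset E}
    (hC : G.Circuit k ℓ C) : G.Circuit k ℓ (C.image g) := by
  refine ⟨hφ.sparse_image_iff.not.mpr hC.1, ?_⟩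
  simp only [Finset.mem_image, forall_exists_index, and_imp]
  rintro _ e he rfl
  rw [← Finset.image_erase hφ.injective_edge, hφ.sparse_image_iff]
  exact hC.2 e he

end SelfEmbedding

section Development

variable {G : Multigraph V E} {γ : E → ZMod 3}

theorem isSelfEmbedding_devShift (z : ZMod 3) :
    (G.Development γ).IsSelfEmbedding (devShift z) (devShiftE z) where
  injective_vert _ _ h := by simpa [devShift, Prod.ext_iff] using h
  injective_edge _ _ h := by simpa [devShiftE, Prod.ext_iff] using h
  tail_map _ := rfl
  head_map _ := Prod.ext rfl (add_right_comm _ _ _)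

theorem orbit_eq_lift [DecidableEq E] (C : Finset (E × ZMod 3)) :
    C ∪ C.image (devShiftE 1) ∪ C.image (devShiftE 2) = lift (C.image Prod.fst) := by
  ext ⟨e, z⟩
  simp only [lift, Finset.mem_union, Finset.mem_image, Finset.mem_product, Finset.mem_univ,
    and_true, devShiftE, Prod.exists, Prod.mk.injEq, exists_and_right, exists_eq_right]
  constructor
  · rintro ((h | ⟨_, _, h, rfl, -⟩) | ⟨_, _, h, rfl, -⟩) <;> exact ⟨_, h⟩
  · rintro ⟨z', h⟩
    obtain rfl | rfl | rfl : z = z' ∨ z = z' + 1 ∨ z = z' + 2 := by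
      generalize z = a; generalize z' = b; revert a b; decide
    exacts [Or.inl (Or.inl h), Or.inl (Or.inr ⟨e, z', h, rfl, rfl⟩),
      Or.inr ⟨e, z', h, rfl, rfl⟩]

theorem image_fst_lift [DecidableEq E] (S : Finset E) : (lift S).image Prod.fst = S :=
  Finset.product_image_fst Finset.univ_nonempty

theorem card_lift [DecidableEq E] (S : Finset E) : (lift S).card = 3 * S.card := by
  rw [lift, Finset.card_product, Finset.card_univ, ZMod.card, mul_comm]

theorem verts_lift [DecidableEq V] [DecidableEq E] (S : Finset E) :
    (G.Development γ).verts (lift S) = lift (G.verts S) := by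
  ext ⟨v, z⟩
  simp only [verts, lift, Development, Finset.mem_union, Finset.mem_image, Finset.mem_product,
    Finset.mem_univ, and_true, Prod.exists, Prod.mk.injEq]
  constructor
  · rintro (⟨e, _, he, h, -⟩ | ⟨e, _, he, h, -⟩)
    exacts [Or.inl ⟨e, he, h⟩, Or.inr ⟨e, he, h⟩]
  · rintro (⟨e, he, h⟩ | ⟨e, he, h⟩)
    exacts [Or.inl ⟨e, z, he, h, rfl⟩, Or.inr ⟨e, z - γ e, he, h, sub_add_cancel z (γ e)⟩]

/-- The covering map `π` on steps of walks. -/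
def projStep (s : (E × ZMod 3) × Bool) : E × Bool :=
  (s.1.1, s.2)

theorem WalkFrom.map_projStep {a b : V × ZMod 3} {w : List ((E × ZMod 3) × Bool)}
    (h : (G.Development γ).WalkFrom a b w) :
    G.WalkFrom a.1 b.1 (w.map projStep) ∧ rho γ (w.map projStep) = b.2 - a.2 := by
  induction h with
  | nil v => exact ⟨.nil v.1, by simp [rho]⟩
  | cons s _ ih =>
    obtain ⟨⟨e, z⟩, b⟩ := s
    refine ⟨?_, ?_⟩
    · cases b
      exacts [.cons (e, false) ih.1, .cons (e, true) ih.1]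
    · rw [List.map_cons, rho_cons, ih.2]
      cases b <;> simp [rho, projStep, stepSrc, stepDst, Development] <;> ring

end Development

end Multigraph

open Multigraph in
theorem connected_orbit_of_laman_circuit_general
    {V E : Type} [DecidableEq V] [DecidableEq E]
    (G : Multigraph V E) (γ : E → ZMod 3) (C : Finset (E × ZMod 3))
    (hC : (G.Development γ).Circuit 2 3 C)
    (O : Finset (E × ZMod 3))
    (hO : O = C ∪ C.image (devShiftE 1) ∪ C.image (devShiftE 2))
    (hOconn : ∀ u ∈ (G.Development γ).verts O, ∀ v ∈ (G.Development γ).verts O,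
      ∃ w, (G.Development γ).IsPathIn O u v w) :
    2 * (((G.Development γ).verts O).card : ℤ) ≤ (O.card : ℤ) ∧
    ¬ G.TrivialImage γ (O.image Prod.fst) ∧
    ¬ (((O.image Prod.fst).card : ℤ) ≤ 2 * ((G.verts (O.image Prod.fst)).card : ℤ) - 1) := by
  have hwalks : ∀ u ∈ (G.Development γ).verts O, ∀ v ∈ (G.Development γ).verts O,
      ∃ w, (G.Development γ).WalkFrom u v w ∧ ∀ s ∈ w, s.1 ∈ O :=
    fun u hu v hv => (hOconn u hu v hv).imp fun _ hw => ⟨hw.1, hw.2.1⟩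
  have hfree : (G.Development γ).freedom 2 O < 3 := by
    subst hO
    exact freedom_union_union_lt (by norm_num) (by norm_num) hC
      ((isSelfEmbedding_devShift 1).circuit_image hC)
      ((isSelfEmbedding_devShift 2).circuit_image hC) hwalks
  obtain ⟨x, hx⟩ := hC.nonempty
  have hxO : x ∈ O := hO ▸ Finset.mem_union_left _ (Finset.mem_union_left _ hx)
  obtain ⟨S, rfl⟩ : ∃ S, O = lift S := ⟨_, hO.trans (orbit_eq_lift C)⟩
  rw [image_fst_lift]
  have hcount : 2 * ((G.verts S).card : ℤ) ≤ S.card := by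
    rw [freedom, verts_lift, card_lift, card_lift] at hfree
    omega
  refine ⟨by rw [verts_lift, card_lift, card_lift]; omega, fun hT => ?_, by omega⟩
  have hv : ∀ z, (G.tail x.1, z) ∈ (G.Development γ).verts (lift S) := fun z => by
    rw [verts_lift]
    exact Finset.mem_product.mpr
      ⟨tail_mem_verts (Finset.mem_product.mp hxO).1, Finset.mem_univ z⟩
  obtain ⟨w, hw, hwO⟩ := hwalks _ (hv 0) _ (hv 1)
  obtain ⟨hπ, hρ⟩ := hw.map_projStep
  rw [hT.rho_eq_zero hπ ?_] at hρ
  · exact absurd hρ (by simp)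
  · simp only [List.mem_map]
    rintro _ ⟨s, hs, rfl⟩
    exact (Finset.mem_product.mp (hwO s hs)).1

open Multigraph in
/-- if a Laman circuit in the development has a connected orbit `O` under the
`ℤ/3ℤ`-action, then `O` has at least `2|V(O)|` edges; consequently `π(O)` has non-trivial
image and violates `m' ≤ 2n' - 1`. -/
theorem connected_orbit_of_laman_circuit
    {V E : Type} [Fintype V] [Fintype E] [DecidableEq V] [DecidableEq E]
    (G : Multigraph V E) (γ : E → ZMod 3) (C : Finset (E × ZMod 3))
    (hC : (G.Development γ).Circuit 2 3 C)
    (O : Finset (E × ZMod 3))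
    (hO : O = C ∪ C.image (devShiftE 1) ∪ C.image (devShiftE 2))
    (hOconn : ∀ u ∈ (G.Development γ).verts O, ∀ v ∈ (G.Development γ).verts O,
      ∃ w, (G.Development γ).IsPathIn O u v w) :
    2 * (((G.Development γ).verts O).card : ℤ) ≤ (O.card : ℤ) ∧
    ¬ G.TrivialImage γ (O.image Prod.fst) ∧
    ¬ (((O.image Prod.fst).card : ℤ) ≤ 2 * ((G.verts (O.image Prod.fst)).card : ℤ) - 1) :=
  connected_orbit_of_laman_circuit_general G γ C hC O hO hOconn
end
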